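/- Let v(y) = ∏_{i=1}^n (y + k_i)^{a_i} − κ·y and w(y) = β·∏_{i=1}^n (y + k_i)^{b_i} with all k_i > 0, κ, β > 0, natural numbers a_i < b_i for all i, and suppose (i) v(0) > w(0), (ii) v'(0) < 0, (iii) v' has a (unique) positive root ξ with v(ξ) < w(ξ), and (iv) there exists σ > ξ with v(σ) > w(σ). Then v − w has exactly three roots in (0, ∞), one in each of the intervals (0, ξ), (ξ, σ), (σ, ∞). -/

import Mathlib

/-!
Write `v - w = p - κ X - β q` with `p = ∏ (X + k_i) ^ a_i` and `q = r p`,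
`r = ∏ (X + k_i) ^ (b_i - a_i)`. The coefficients of `p` are log-concave, and multiplying by
factors `X + k` with `k ≥ 0` keeps the ratio `q_l / p_l` nondecreasing in `l`; differentiation
preserves this. Pairing the terms of `p''(x) q''(y) - p''(y) q''(x)` then shows that `p'' / q''` is
strictly decreasing on `(0, ∞)`, so `(v - w)'' = p'' - β q''` has at most one positive root and,
by Rolle, `v - w` has at most three. The signs of `v - w` at `0`, `ξ`, `σ` and at infinity give
one root in each of the three intervals.
-/

open Polynomial

theorem pow_mul_pow_lt_pow_mul_pow {R : Type*} [CommSemiring R] [LinearOrder R]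
    [IsStrictOrderedRing R] {x y : R} (hx : 0 < x) (hxy : x < y) {m l : ℕ} (hml : m < l) :
    x ^ l * y ^ m < x ^ m * y ^ l := by
  obtain ⟨e, rfl⟩ := Nat.exists_eq_add_of_lt hml
  have hy : 0 < y := hx.trans hxy
  calc x ^ (m + e + 1) * y ^ m = x ^ m * y ^ m * x ^ (e + 1) := by ring
    _ < x ^ m * y ^ m * y ^ (e + 1) := by gcongr
    _ = x ^ m * y ^ (m + e + 1) := by ring

namespace Polynomial

section Semiring

variable {R : Type*} [Semiring R]

theorem coeff_X_add_C_mul_zero (k : R) (p : R[X]) : ((X + C k) * p).coeff 0 = k * p.coeff 0 := by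
  simp [mul_coeff_zero]

theorem coeff_X_add_C_mul_succ (k : R) (p : R[X]) (j : ℕ) :
    ((X + C k) * p).coeff (j + 1) = p.coeff j + k * p.coeff (j + 1) := by
  rw [add_mul, coeff_add, coeff_X_mul, coeff_C_mul]

theorem two_le_natDegree_of_eval_derivative_ne {p : R[X]} {x y : R}
    (h : (derivative p).eval x ≠ (derivative p).eval y) : 2 ≤ p.natDegree := by
  by_contra! hp
  have h0 : (derivative p).natDegree = 0 :=
    Nat.le_zero.1 ((natDegree_derivative_le p).trans (by omega))
  rw [eq_C_of_natDegree_eq_zero h0, eval_C, eval_C] at h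
  exact h rfl

end Semiring

theorem natDegree_prod_X_add_C_pow {R ι : Type*} [CommSemiring R] [Nontrivial R] (s : Finset ι)
    (k : ι → R) (a : ι → ℕ) : (∏ i ∈ s, (X + C (k i)) ^ a i).natDegree = ∑ i ∈ s, a i := by
  rw [natDegree_prod_of_monic _ _ fun i _ => (monic_X_add_C (k i)).pow (a i)]
  simp

theorem two_mul_eval_mul_eval_sub_eq_sum {R : Type*} [CommRing R] {p q : R[X]} {N : ℕ}
    (hp : p.natDegree < N) (hq : q.natDegree < N) (x y : R) :
    2 * (p.eval x * q.eval y - p.eval y * q.eval x) = ∑ m ∈ Finset.range N, ∑ l ∈ Finset.range N,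
      (p.coeff m * q.coeff l - p.coeff l * q.coeff m) * (x ^ m * y ^ l - x ^ l * y ^ m) := by
  have hexpand : p.eval x * q.eval y - p.eval y * q.eval x = ∑ m ∈ Finset.range N,
      ∑ l ∈ Finset.range N, p.coeff m * q.coeff l * (x ^ m * y ^ l - y ^ m * x ^ l) := by
    simp only [eval_eq_sum_range' hp, eval_eq_sum_range' hq, Finset.sum_mul_sum,
      ← Finset.sum_sub_distrib, mul_sub]
    exact Finset.sum_congr rfl fun m _ => Finset.sum_congr rfl fun l _ => by ring
  have hswap := hexpand.trans Finset.sum_comm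
  rw [two_mul]
  nth_rewrite 1 [hexpand]
  rw [hswap, ← Finset.sum_add_distrib]
  refine Finset.sum_congr rfl fun m _ => ?_
  rw [← Finset.sum_add_distrib]
  exact Finset.sum_congr rfl fun l _ => by ring

theorem leadingCoeff_sub_sub_C_mul {R : Type*} [Ring R] [NoZeroDivisors R] {p ℓ q : R[X]}
    (hp : p.natDegree < q.natDegree) (hℓ : ℓ.natDegree < q.natDegree) (hq : q.Monic) {β : R}
    (hβ : β ≠ 0) : (p - ℓ - C β * q).leadingCoeff = -β := by
  have hlt : (p - ℓ).natDegree < (C β * q).natDegree := by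
    rw [natDegree_C_mul hβ]
    exact (natDegree_sub_le _ _).trans_lt (max_lt hp hℓ)
  rw [leadingCoeff_sub_of_degree_lt' (degree_lt_degree hlt), leadingCoeff_mul, leadingCoeff_C,
    hq.leadingCoeff, mul_one]

section OrderedCoeffs

variable {R : Type*} [CommSemiring R] [PartialOrder R]

/-- Log-concavity of the coefficient sequence without internal zeros, in the ratio form
`c (l + 1) / c l ≤ c (m + 1) / c m` for `m ≤ l`, cross-multiplied. -/
structure LogConcaveCoeffs (p : R[X]) : Prop where
  nonneg : ∀ j, 0 ≤ p.coeff j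
  coeff_succ_eq_zero : ∀ j, p.coeff j = 0 → p.coeff (j + 1) = 0
  coeff_succ_mul_le : ∀ m l, m ≤ l → p.coeff (l + 1) * p.coeff m ≤ p.coeff (m + 1) * p.coeff l

/-- `q.coeff l / p.coeff l` is nondecreasing in `l`, cross-multiplied so that vanishing
coefficients of `p` are allowed. -/
def CoeffRatioMonotone (p q : R[X]) : Prop :=
  ∀ m l, m ≤ l → p.coeff l * q.coeff m ≤ p.coeff m * q.coeff l

theorem LogConcaveCoeffs.coeff_eq_zero_of_le {p : R[X]} (hp : LogConcaveCoeffs p) {m l : ℕ}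
    (hml : m ≤ l) (h : p.coeff m = 0) : p.coeff l = 0 := by
  induction l, hml using Nat.le_induction with
  | base => exact h
  | succ l _ ih => exact hp.coeff_succ_eq_zero l ih

theorem CoeffRatioMonotone.refl (p : R[X]) : CoeffRatioMonotone p p :=
  fun _ _ _ => (mul_comm _ _).le

end OrderedCoeffs

section OrderedCommRing

variable {R : Type*} [CommRing R] [LinearOrder R] [IsStrictOrderedRing R]

theorem coeff_X_add_C_mul_nonneg {k : R} (hk : 0 ≤ k) {p : R[X]} (hp : ∀ j, 0 ≤ p.coeff j)
    (j : ℕ) : 0 ≤ ((X + C k) * p).coeff j := by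
  cases j with
  | zero => rw [coeff_X_add_C_mul_zero]; exact mul_nonneg hk (hp 0)
  | succ j => rw [coeff_X_add_C_mul_succ]; exact add_nonneg (hp j) (mul_nonneg hk (hp (j + 1)))

namespace LogConcaveCoeffs

variable {p : R[X]}

theorem one : LogConcaveCoeffs (1 : R[X]) := by
  have hnonneg (j : ℕ) : 0 ≤ (1 : R[X]).coeff j := by rw [coeff_one]; split_ifs <;> simp
  refine ⟨hnonneg, fun j _ => by simp [coeff_one], fun m l _ => ?_⟩
  rw [coeff_one, if_neg (by omega), zero_mul]
  exact mul_nonneg (hnonneg _) (hnonneg _)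

theorem X_add_C_mul {k : R} (hk : 0 < k) (hp : LogConcaveCoeffs p) :
    LogConcaveCoeffs ((X + C k) * p) := by
  obtain ⟨hnonneg, hzero, hratio⟩ := hp
  refine ⟨coeff_X_add_C_mul_nonneg hk.le hnonneg, fun j h => ?_, fun m l hml => ?_⟩
  · cases j with
    | zero =>
      rw [coeff_X_add_C_mul_zero, mul_eq_zero, or_iff_right hk.ne'] at h
      rw [coeff_X_add_C_mul_succ, h, hzero 0 h, mul_zero, add_zero]
    | succ j =>
      rw [coeff_X_add_C_mul_succ] at h
      have h1 : p.coeff (j + 1) = 0 := by nlinarith [hnonneg j, hnonneg (j + 1)]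
      rw [coeff_X_add_C_mul_succ, h1, hzero (j + 1) h1, mul_zero, add_zero]
  · rcases hml.eq_or_lt with rfl | hlt
    · exact le_rfl
    obtain ⟨l, rfl⟩ : ∃ l', l = l' + 1 := ⟨l - 1, by omega⟩
    cases m with
    | zero =>
      rw [coeff_X_add_C_mul_zero, coeff_X_add_C_mul_succ, coeff_X_add_C_mul_succ,
        coeff_X_add_C_mul_succ]
      nlinarith [mul_le_mul_of_nonneg_left (hratio 0 (l + 1) (by omega)) (sq_nonneg k),
        mul_nonneg (hnonneg 0) (hnonneg l), mul_nonneg (mul_nonneg hk.le (hnonneg 1)) (hnonneg l),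
        hnonneg 0, hnonneg 1, hnonneg l, hnonneg (l + 1), hnonneg (l + 2)]
    | succ m =>
      rw [coeff_X_add_C_mul_succ, coeff_X_add_C_mul_succ, coeff_X_add_C_mul_succ,
        coeff_X_add_C_mul_succ]
      have hcross : p.coeff (l + 2) * p.coeff m ≤ p.coeff (m + 2) * p.coeff l :=
        calc p.coeff (l + 2) * p.coeff m ≤ p.coeff (m + 1) * p.coeff (l + 1) :=
              hratio m (l + 1) (by omega)
          _ = p.coeff (l + 1) * p.coeff (m + 1) := mul_comm _ _
          _ ≤ p.coeff (m + 2) * p.coeff l := hratio (m + 1) l (by omega)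
      nlinarith [mul_le_mul_of_nonneg_left hcross hk.le,
        mul_le_mul_of_nonneg_left (hratio (m + 1) (l + 1) (by omega)) (sq_nonneg k),
        hratio m l (by omega)]

theorem X_add_C_pow_mul {k : R} (hk : 0 < k) (hp : LogConcaveCoeffs p) (e : ℕ) :
    LogConcaveCoeffs ((X + C k) ^ e * p) := by
  induction e with
  | zero => simpa using hp
  | succ e ih => rw [pow_succ', mul_assoc]; exact ih.X_add_C_mul hk

end LogConcaveCoeffs

theorem logConcaveCoeffs_prod_X_add_C_pow {ι : Type*} (s : Finset ι) {k : ι → R}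
    (hk : ∀ i ∈ s, 0 < k i) (a : ι → ℕ) : LogConcaveCoeffs (∏ i ∈ s, (X + C (k i)) ^ a i) := by
  classical
  induction s using Finset.induction_on with
  | empty => exact LogConcaveCoeffs.one
  | insert i s hi ih =>
    rw [Finset.prod_insert hi]
    exact (ih fun j hj => hk j (Finset.mem_insert_of_mem hj)).X_add_C_pow_mul
      (hk i (Finset.mem_insert_self i s)) (a i)

namespace CoeffRatioMonotone

variable {p q : R[X]}

theorem coeff_succ_mul_le (hp : LogConcaveCoeffs p) (hq : ∀ j, 0 ≤ q.coeff j)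
    (h : CoeffRatioMonotone p q) {m l : ℕ} (hml : m ≤ l) :
    p.coeff (l + 1) * q.coeff m ≤ p.coeff (m + 1) * q.coeff l := by
  rcases (hp.nonneg m).eq_or_lt with hm | hm
  · rw [hp.coeff_eq_zero_of_le (by omega : m ≤ l + 1) hm.symm, zero_mul]
    exact mul_nonneg (hp.nonneg _) (hq _)
  · refine le_of_mul_le_mul_right ?_ hm
    nlinarith [mul_le_mul_of_nonneg_right (hp.coeff_succ_mul_le m l hml) (hq m),
      mul_le_mul_of_nonneg_left (h m l hml) (hp.nonneg (m + 1))]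

theorem X_add_C_mul {k : R} (hk : 0 ≤ k) (hp : LogConcaveCoeffs p) (hq : ∀ j, 0 ≤ q.coeff j)
    (h : CoeffRatioMonotone p q) : CoeffRatioMonotone p ((X + C k) * q) := by
  intro m l hml
  rcases hml.eq_or_lt with rfl | hlt
  · exact le_rfl
  obtain ⟨l, rfl⟩ : ∃ l', l = l' + 1 := ⟨l - 1, by omega⟩
  cases m with
  | zero =>
    rw [coeff_X_add_C_mul_zero, coeff_X_add_C_mul_succ]
    nlinarith [mul_le_mul_of_nonneg_left (h 0 (l + 1) (by omega)) hk,
      mul_nonneg (hp.nonneg 0) (hq l)]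
  | succ m =>
    rw [coeff_X_add_C_mul_succ, coeff_X_add_C_mul_succ]
    nlinarith [coeff_succ_mul_le hp hq h (by omega : m ≤ l),
      mul_le_mul_of_nonneg_left (h (m + 1) (l + 1) (by omega)) hk]

theorem prod_X_add_C_pow_mul {ι : Type*} (s : Finset ι) {k : ι → R} (hk : ∀ i ∈ s, 0 ≤ k i)
    (c : ι → ℕ) (hp : LogConcaveCoeffs p) (hq : ∀ j, 0 ≤ q.coeff j)
    (h : CoeffRatioMonotone p q) :
    CoeffRatioMonotone p ((∏ i ∈ s, (X + C (k i)) ^ c i) * q) := by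
  let Preserves (r : R[X]) : Prop := ∀ q : R[X], (∀ j, 0 ≤ q.coeff j) →
    CoeffRatioMonotone p q → (∀ j, 0 ≤ (r * q).coeff j) ∧ CoeffRatioMonotone p (r * q)
  have hone : Preserves 1 := fun q hq h => by simpa using ⟨hq, h⟩
  have hmul (r₁ r₂ : R[X]) (h₁ : Preserves r₁) (h₂ : Preserves r₂) : Preserves (r₁ * r₂) :=
    fun q hq h => mul_assoc r₁ r₂ q ▸ h₁ _ (h₂ q hq h).1 (h₂ q hq h).2
  have hpow (i : ι) (hi : i ∈ s) (e : ℕ) : Preserves ((X + C (k i)) ^ e) := by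
    induction e with
    | zero => simpa using hone
    | succ e ih =>
      exact pow_succ (X + C (k i)) e ▸ hmul _ _ ih fun q hq h =>
        ⟨coeff_X_add_C_mul_nonneg (hk i hi) hq, h.X_add_C_mul (hk i hi) hp hq⟩
  exact (Finset.prod_induction _ Preserves hmul hone (fun i hi => hpow i hi (c i)) q hq h).2

theorem derivative (h : CoeffRatioMonotone p q) :
    CoeffRatioMonotone (derivative p) (derivative q) := by
  intro m l hml
  simp only [coeff_derivative]
  calc p.coeff (l + 1) * (l + 1) * (q.coeff (m + 1) * (m + 1))
      = ((m : R) + 1) * (l + 1) * (p.coeff (l + 1) * q.coeff (m + 1)) := by ring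
    _ ≤ ((m : R) + 1) * (l + 1) * (p.coeff (m + 1) * q.coeff (l + 1)) :=
      mul_le_mul_of_nonneg_left (h (m + 1) (l + 1) (by omega)) (by positivity)
    _ = p.coeff (m + 1) * (m + 1) * (q.coeff (l + 1) * (l + 1)) := by ring

theorem cross_term_nonneg (h : CoeffRatioMonotone p q) {x y : R} (hx : 0 < x) (hxy : x < y)
    (m l : ℕ) :
    0 ≤ (p.coeff m * q.coeff l - p.coeff l * q.coeff m) * (x ^ m * y ^ l - x ^ l * y ^ m) := by
  have hpow {m l : ℕ} (hml : m ≤ l) : x ^ l * y ^ m ≤ x ^ m * y ^ l := by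
    rcases hml.eq_or_lt with rfl | hlt
    · exact le_rfl
    · exact (pow_mul_pow_lt_pow_mul_pow hx hxy hlt).le
  rcases le_total m l with hml | hlm
  · exact mul_nonneg (sub_nonneg.2 (h m l hml)) (sub_nonneg.2 (hpow hml))
  · exact mul_nonneg_of_nonpos_of_nonpos (sub_nonpos.2 (h l m hlm)) (sub_nonpos.2 (hpow hlm))

theorem eval_mul_lt (h : CoeffRatioMonotone p q) (hdeg : p.natDegree < q.natDegree)
    (hp : 0 < p.leadingCoeff) (hq : 0 < q.leadingCoeff) {x y : R} (hx : 0 < x) (hxy : x < y) :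
    p.eval y * q.eval x < p.eval x * q.eval y := by
  have hlead : 0 < (p.coeff p.natDegree * q.coeff q.natDegree
      - p.coeff q.natDegree * q.coeff p.natDegree)
      * (x ^ p.natDegree * y ^ q.natDegree - x ^ q.natDegree * y ^ p.natDegree) := by
    rw [coeff_eq_zero_of_natDegree_lt hdeg, zero_mul, sub_zero]
    exact mul_pos (mul_pos hp hq) (sub_pos.2 (pow_mul_pow_lt_pow_mul_pow hx hxy hdeg))
  have hpos : 0 < 2 * (p.eval x * q.eval y - p.eval y * q.eval x) := by
    rw [two_mul_eval_mul_eval_sub_eq_sum (N := q.natDegree + 1) (by omega) (by omega),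
      ← Finset.sum_product']
    exact Finset.sum_pos' (fun mn _ => h.cross_term_nonneg hx hxy mn.1 mn.2)
      ⟨(p.natDegree, q.natDegree), Finset.mem_product.2
        ⟨Finset.mem_range.2 (by omega), Finset.mem_range.2 (by omega)⟩, hlead⟩
  linarith

end CoeffRatioMonotone

theorem coeffRatioMonotone_prod_X_add_C_pow {ι : Type*} (s : Finset ι) {k : ι → R}
    (hk : ∀ i ∈ s, 0 < k i) {a b : ι → ℕ} (hab : ∀ i ∈ s, a i ≤ b i) :
    CoeffRatioMonotone (∏ i ∈ s, (X + C (k i)) ^ a i) (∏ i ∈ s, (X + C (k i)) ^ b i) := by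
  have hp := logConcaveCoeffs_prod_X_add_C_pow s hk a
  have hfactor : ∏ i ∈ s, (X + C (k i)) ^ b i
      = (∏ i ∈ s, (X + C (k i)) ^ (b i - a i)) * ∏ i ∈ s, (X + C (k i)) ^ a i := by
    rw [← Finset.prod_mul_distrib]
    exact Finset.prod_congr rfl fun i hi => by rw [← pow_add, Nat.sub_add_cancel (hab i hi)]
  rw [hfactor]
  exact (CoeffRatioMonotone.refl _).prod_X_add_C_pow_mul s (fun i hi => (hk i hi).le) _ hp
    hp.nonneg

end OrderedCommRing

noncomputable def rootsIn (p : ℝ[X]) (s : Set ℝ) [DecidablePred (· ∈ s)] : Finset ℝ :=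
  p.roots.toFinset.filter (· ∈ s)

section RootsIn

open Set

variable {p : ℝ[X]} {s : Set ℝ} [DecidablePred (· ∈ s)]

theorem mem_rootsIn {x : ℝ} : x ∈ p.rootsIn s ↔ p ≠ 0 ∧ p.IsRoot x ∧ x ∈ s := by
  simp [rootsIn, mem_roots', and_assoc]

theorem card_rootsIn_le_derivative (hs : s.OrdConnected) :
    (p.rootsIn s).card ≤ ((derivative p).rootsIn s).card + 1 := by
  refine Finset.card_le_of_interleaved fun x hx y hy hxy _ => ?_
  rw [mem_rootsIn] at hx hy
  obtain ⟨z, hz, hz0⟩ := exists_deriv_eq_zero hxy p.continuousOn (hx.2.1.trans hy.2.1.symm)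
  refine ⟨z, mem_rootsIn.2 ⟨fun h => ?_, by rwa [IsRoot, ← p.deriv], ?_⟩, hz⟩
  · obtain ⟨c, rfl⟩ : ∃ c, p = C c := ⟨_, eq_C_of_derivative_eq_zero h⟩
    simp_all
  · exact hs.out hx.2.2 hy.2.2 (Ioo_subset_Icc_self hz)

end RootsIn

section PositiveRoots

open Set

theorem card_rootsIn_Ioi_sub_C_mul_le_one {p q : ℝ[X]}
    (h : CoeffRatioMonotone p q) (hdeg : p.natDegree < q.natDegree) (hp : 0 < p.leadingCoeff)
    (hq : 0 < q.leadingCoeff) (β : ℝ) : ((p - C β * q).rootsIn (Ioi 0)).card ≤ 1 := by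
  have hroot {x : ℝ} (hx : x ∈ (p - C β * q).rootsIn (Ioi 0)) : p.eval x = β * q.eval x := by
    have := (mem_rootsIn.1 hx).2.1
    rwa [IsRoot, eval_sub, eval_mul, eval_C, sub_eq_zero] at this
  refine Finset.card_le_one.2 fun x hx y hy => ?_
  by_contra! hne
  wlog hxy : x < y generalizing x y
  · exact this y hy x hx hne.symm (hne.lt_or_gt.resolve_left hxy)
  have := h.eval_mul_lt hdeg hp hq (mem_rootsIn.1 hx).2.2 hxy
  rw [hroot hx, hroot hy] at this
  linarith

theorem card_rootsIn_Ioi_sub_sub_C_mul_le_three {p q ℓ : ℝ[X]}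
    (h : CoeffRatioMonotone p q) (hp2 : 2 ≤ p.natDegree) (hdeg : p.natDegree < q.natDegree)
    (hp : 0 < p.leadingCoeff) (hq : 0 < q.leadingCoeff) (hℓ : ℓ.natDegree ≤ 1) (β : ℝ) :
    ((p - ℓ - C β * q).rootsIn (Ioi 0)).card ≤ 3 := by
  have hℓ' : derivative (derivative ℓ) = 0 := by
    rw [derivative_eq_zero, natDegree_derivative]; omega
  have hpos {r : ℝ[X]} (hr : 2 ≤ r.natDegree) (hr' : 0 < r.leadingCoeff) :
      0 < (derivative (derivative r)).leadingCoeff := by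
    simp only [leadingCoeff_derivative, natDegree_derivative]
    have : (0 : ℝ) < (r.natDegree - 1 : ℕ) := Nat.cast_pos.2 (by omega)
    positivity
  have h2 : ((derivative (derivative (p - ℓ - C β * q))).rootsIn (Ioi 0)).card ≤ 1 := by
    simp only [derivative_sub, derivative_C_mul, hℓ', sub_zero]
    exact card_rootsIn_Ioi_sub_C_mul_le_one h.derivative.derivative
      (by simp only [natDegree_derivative]; omega) (hpos hp2 hp) (hpos (by omega) hq) β
  linarith [card_rootsIn_le_derivative (p := p - ℓ - C β * q) (ordConnected_Ioi (a := 0)),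
    card_rootsIn_le_derivative (p := derivative (p - ℓ - C β * q)) (ordConnected_Ioi (a := 0))]

open Filter in
theorem existsUnique_isRoot_of_card_rootsIn_Ioi_le_three {g : ℝ[X]}
    (hcard : (g.rootsIn (Ioi 0)).card ≤ 3) (hlc : g.leadingCoeff < 0) {ξ σ : ℝ} (hξ : 0 < ξ)
    (hξσ : ξ < σ) (h0 : 0 < g.eval 0) (hgξ : g.eval ξ < 0) (hgσ : 0 < g.eval σ) :
    (∃! y, y ∈ Ioo 0 ξ ∧ g.IsRoot y) ∧ (∃! y, y ∈ Ioo ξ σ ∧ g.IsRoot y) ∧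
      (∃! y, y ∈ Ioi σ ∧ g.IsRoot y) := by
  have hdeg : 0 < g.degree := by
    by_contra! hdeg
    rw [eq_C_of_degree_le_zero hdeg, eval_C] at h0
    rw [eq_C_of_degree_le_zero hdeg, leadingCoeff_C] at hlc
    linarith
  obtain ⟨T, hσT, hgT⟩ : ∃ T, σ < T ∧ g.eval T < 0 :=
    ((eventually_gt_atTop σ).and ((tendsto_atBot_of_leadingCoeff_nonpos g hdeg hlc.le).eventually
      (eventually_lt_atBot 0))).exists
  obtain ⟨r₁, hr₁, e₁⟩ := intermediate_value_Ioo' hξ.le g.continuousOn ⟨hgξ, h0⟩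
  obtain ⟨r₂, hr₂, e₂⟩ := intermediate_value_Ioo hξσ.le g.continuousOn ⟨hgξ, hgσ⟩
  obtain ⟨r₃, hr₃, e₃⟩ := intermediate_value_Ioo' hσT.le g.continuousOn ⟨hgT, hgσ⟩
  have hg : g ≠ 0 := by rintro rfl; simp at hlc
  have hs : {r₁, r₂, r₃} = g.rootsIn (Ioi 0) := by
    refine Finset.eq_of_subset_of_card_le ?_ ?_
    · simp only [Finset.insert_subset_iff, Finset.singleton_subset_iff, mem_rootsIn]
      exact ⟨⟨hg, e₁, hr₁.1⟩, ⟨hg, e₂, hξ.trans hr₂.1⟩, ⟨hg, e₃, hξ.trans (hξσ.trans hr₃.1)⟩⟩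
    · rw [Finset.card_eq_three.2 ⟨r₁, r₂, r₃, by grind, by grind, by grind, rfl⟩]
      exact hcard
  have hmem {z : ℝ} (hz : 0 < z) (ez : g.IsRoot z) : z = r₁ ∨ z = r₂ ∨ z = r₃ := by
    simpa [← hs] using (mem_rootsIn (s := Ioi 0)).2 ⟨hg, ez, hz⟩
  refine ⟨⟨r₁, ⟨hr₁, e₁⟩, fun z ⟨hz, ez⟩ => ?_⟩, ⟨r₂, ⟨hr₂, e₂⟩, fun z ⟨hz, ez⟩ => ?_⟩,
    ⟨r₃, ⟨hr₃.1, e₃⟩, fun z ⟨hz, ez⟩ => ?_⟩⟩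
  all_goals
    simp only [mem_Ioo, mem_Ioi] at hz hr₁ hr₂ hr₃
    rcases hmem (by linarith) ez with rfl | rfl | rfl <;> first | rfl | linarith

end PositiveRoots

end Polynomial

theorem stmt17_general (n : ℕ) (k : Fin n → ℝ) (hk : ∀ i, 0 < k i)
    (a b : Fin n → ℕ) (hab : ∀ i, a i < b i)
    (κ β : ℝ) (hβ : 0 < β)
    (v w : ℝ[X])
    (hv : v = (∏ i, (X + C (k i)) ^ a i) - C κ * X)
    (hw : w = C β * ∏ i, (X + C (k i)) ^ b i)
    (h0 : w.eval 0 < v.eval 0)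
    (hd0 : (derivative v).eval 0 < 0)
    (ξ : ℝ) (hξpos : 0 < ξ) (hξ : (derivative v).eval ξ = 0)
    (hvw : v.eval ξ < w.eval ξ)
    (σ : ℝ) (hσ : ξ < σ) (hvwσ : w.eval σ < v.eval σ) :
    (∃! y, y ∈ Set.Ioo 0 ξ ∧ v.eval y = w.eval y) ∧
    (∃! y, y ∈ Set.Ioo ξ σ ∧ v.eval y = w.eval y) ∧
    (∃! y, y ∈ Set.Ioi σ ∧ v.eval y = w.eval y) := by
  set p := ∏ i, (X + C (k i)) ^ a i
  set q := ∏ i, (X + C (k i)) ^ b i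
  have hp : p.Monic := monic_prod_of_monic _ _ fun i _ => (monic_X_add_C (k i)).pow (a i)
  have hq : q.Monic := monic_prod_of_monic _ _ fun i _ => (monic_X_add_C (k i)).pow (b i)
  have hp2 : 2 ≤ p.natDegree := by
    refine two_le_natDegree_of_eval_derivative_ne (x := 0) (y := ξ) fun h => ?_
    simp only [hv, derivative_sub, derivative_C_mul, derivative_X, mul_one, eval_sub,
      eval_C] at hd0 hξ
    linarith
  have hdeg : p.natDegree < q.natDegree := by
    simp only [p, q, natDegree_prod_X_add_C_pow] at hp2 ⊢
    exact Finset.sum_lt_sum_of_nonempty (Finset.nonempty_of_sum_ne_zero (f := a) (by omega))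
      fun i _ => hab i
  have hlin : (C κ * X).natDegree ≤ 1 := (natDegree_C_mul_le κ X).trans natDegree_X_le
  have hsub : v - w = p - C κ * X - C β * q := by rw [hv, hw]
  have hlc : (v - w).leadingCoeff < 0 := by
    rw [hsub, leadingCoeff_sub_sub_C_mul hdeg (by omega) hq hβ.ne']
    exact neg_neg_of_pos hβ
  have hcard := card_rootsIn_Ioi_sub_sub_C_mul_le_three
    (coeffRatioMonotone_prod_X_add_C_pow Finset.univ (fun i _ => hk i) fun i _ => (hab i).le)
    hp2 hdeg (hp.leadingCoeff ▸ one_pos) (hq.leadingCoeff ▸ one_pos) hlin β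
  have := existsUnique_isRoot_of_card_rootsIn_Ioi_le_three (hsub ▸ hcard) hlc hξpos hσ
    (by rw [eval_sub]; linarith) (by rw [eval_sub]; linarith) (by rw [eval_sub]; linarith)
  simpa only [IsRoot, eval_sub, sub_eq_zero] using this

theorem stmt17 (n : ℕ) (k : Fin n → ℝ) (hk : ∀ i, 0 < k i)
    (a b : Fin n → ℕ) (hab : ∀ i, a i < b i)
    (κ β : ℝ) (hκ : 0 < κ) (hβ : 0 < β)
    (v w : ℝ[X])
    (hv : v = (∏ i, (X + C (k i)) ^ a i) - C κ * X)
    (hw : w = C β * ∏ i, (X + C (k i)) ^ b i)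
    (h0 : w.eval 0 < v.eval 0)
    (hd0 : (derivative v).eval 0 < 0)
    (ξ : ℝ) (hξpos : 0 < ξ) (hξ : (derivative v).eval ξ = 0)
    (hξu : ∀ z : ℝ, 0 < z → (derivative v).eval z = 0 → z = ξ)
    (hvw : v.eval ξ < w.eval ξ)
    (σ : ℝ) (hσ : ξ < σ) (hvwσ : w.eval σ < v.eval σ) :
    (∃! y, y ∈ Set.Ioo 0 ξ ∧ v.eval y = w.eval y) ∧
    (∃! y, y ∈ Set.Ioo ξ σ ∧ v.eval y = w.eval y) ∧
    (∃! y, y ∈ Set.Ioi σ ∧ v.eval y = w.eval y) :=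
  stmt17_general n k hk a b hab κ β hβ v w hv hw h0 hd0 ξ hξpos hξ hvw σ hσ hvwσ
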